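/- Let K be a field, G a group with fixed finite generating set, R = KG the group algebra, H ≤ G a subgroup, and I the right ideal of R generated by {h − 1 : h ∈ H}. Then a set T ⊆ G is a (Schreier) transversal for H in G if and only if T is a basis of a complementary subspace to I in R consisting of group elements; consequently Γ_{G/H}(n) = Γ_{R/I}(n) for all n. -/

import Mathlib

/-- The ball of radius `n` in `G` with respect to the generating set `S`
(words of length at most `n` in `S ∪ S⁻¹`). -/
def wordBall {G : Type*} [Group G] (S : Set G) (n : ℕ) : Set G :=
  {g | ∃ l : List G, l.length ≤ n ∧ (∀ x ∈ l, x ∈ S ∨ x⁻¹ ∈ S) ∧ l.prod = g}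

/-- The word length of `g` with respect to the generating set `S`. -/
noncomputable def wordLength {G : Type*} [Group G] (S : Set G) (g : G) : ℕ :=
  sInf {n | g ∈ wordBall S n}

/-- The growth function of `G` with respect to `S`. -/
noncomputable def growth {G : Type*} [Group G] (S : Set G) (n : ℕ) : ℕ :=
  (wordBall S n).ncard

/-- The cogrowth function of a subgroup `H ≤ G`: the number of right cosets `Hg`
containing an element of word length at most `n`. -/
noncomputable def cogrowth {G : Type*} [Group G] (S : Set G) (H : Subgroup G) (n : ℕ) : ℕ :=
  ((fun g => Quotient.mk (QuotientGroup.rightRel H) g) '' wordBall S n).ncard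

/-- A subgroup is essential if it intersects every nontrivial subgroup nontrivially. -/
def Essential {G : Type*} [Group G] (H : Subgroup G) : Prop :=
  ∀ K : Subgroup G, K ≠ ⊥ → H ⊓ K ≠ ⊥

private lemma wordBall_finite {G : Type*} [Group G] {S : Set G} (hS : S.Finite) :
    ∀ n, (wordBall S n).Finite := by
  intro n
  induction n with
  | zero =>
    apply Set.Finite.subset (Set.finite_singleton 1)
    rintro g ⟨l, hl, -, rfl⟩
    have : l = [] := List.length_eq_zero_iff.mp (Nat.le_zero.mp hl)
    simp [this]
  | succ n ih =>
    apply Set.Finite.subset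
      (Set.Finite.insert 1 (((hS.union hS.inv).prod ih).image fun p : G × G => p.1 * p.2))
    rintro g ⟨l, hl, hmem, rfl⟩
    cases l with
    | nil => simp
    | cons x l' =>
      right
      refine ⟨(x, l'.prod), ⟨?_, l', Nat.le_of_succ_le_succ hl,
        fun y hy => hmem y (List.mem_cons_of_mem _ hy), rfl⟩, by simp⟩
      rcases hmem x List.mem_cons_self with h | h
      · exact Or.inl h
      · exact Or.inr (Set.mem_inv.mpr h)


/-- For the group algebra `R = KG` and the right ideal `I` generated by `{h - 1 : h ∈ H}`,
a set `T ⊆ G` is a transversal for `H` iff the group elements of `T` span a complement of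
`I`; consequently the cogrowth of `H` equals the cogrowth of `I`. -/
theorem groupAlgebra_transversal_iff {K G : Type*} [Field K] [Group G]
    (S : Set G) (hS : S.Finite) (hgen : Subgroup.closure S = ⊤) (H : Subgroup G)
    (I : Submodule K (MonoidAlgebra K G))
    (hI : I = Submodule.span K
      {r | ∃ h ∈ H, ∃ g : G, r = (MonoidAlgebra.of K G h - 1) * MonoidAlgebra.of K G g})
    (T : Set G) :
    ((∀ g : G, ∃! t, t ∈ T ∧
        Quotient.mk (QuotientGroup.rightRel H) t = Quotient.mk (QuotientGroup.rightRel H) g) ↔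
      IsCompl I (Submodule.span K (⇑(MonoidAlgebra.of K G) '' T))) ∧
    ∀ n : ℕ, cogrowth S H n =
      Module.finrank K ↥(Submodule.span K (⇑(MonoidAlgebra.of K G) '' wordBall S n)) -
      Module.finrank K ↥(I ⊓ Submodule.span K (⇑(MonoidAlgebra.of K G) '' wordBall S n)) := by
  classical
  set mk : G → Quotient (QuotientGroup.rightRel H) :=
    fun g => Quotient.mk (QuotientGroup.rightRel H) g with hmk
  set π : MonoidAlgebra K G →ₗ[K] (Quotient (QuotientGroup.rightRel H) →₀ K) :=
    Finsupp.lmapDomain K K mk ∘ₗ (MonoidAlgebra.coeffLinearEquiv K).toLinearMap with hπ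
  have hπs : ∀ (g : G) (a : K), π (MonoidAlgebra.single g a) = Finsupp.single (mk g) a := by
    intro g a
    show Finsupp.mapDomain mk (MonoidAlgebra.single g a).coeff = _
    rw [MonoidAlgebra.coeff_single, Finsupp.mapDomain_single]
  have h_single_mem : ∀ (g g' : G) (a : K), mk g = mk g' →
      (MonoidAlgebra.single g a - MonoidAlgebra.single g' a : MonoidAlgebra K G) ∈ I := by
    intro g g' a hgg'
    have hH : g * g'⁻¹ ∈ H := by
      have h1 : g' * g⁻¹ ∈ H := QuotientGroup.rightRel_apply.mp (Quotient.eq.mp hgg')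
      simpa using H.inv_mem h1
    have h1 : (MonoidAlgebra.single g 1 - MonoidAlgebra.single g' 1 : MonoidAlgebra K G) ∈ I := by
      rw [hI]
      refine Submodule.subset_span ⟨g * g'⁻¹, hH, g', ?_⟩
      rw [sub_mul, one_mul, ← map_mul]
      simp [MonoidAlgebra.of_apply, mul_assoc]
    have h2 := I.smul_mem a h1
    have h3 : a • (MonoidAlgebra.single g 1 - MonoidAlgebra.single g' 1 : MonoidAlgebra K G)
        = (MonoidAlgebra.single g a - MonoidAlgebra.single g' a : MonoidAlgebra K G) := by
      rw [smul_sub, MonoidAlgebra.smul_single, MonoidAlgebra.smul_single, smul_eq_mul, mul_one]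
    rwa [h3] at h2
  have h_I_le_ker : I ≤ LinearMap.ker π := by
    rw [hI, Submodule.span_le]
    rintro r ⟨h, hh, g, rfl⟩
    have heq : (MonoidAlgebra.of K G h - 1) * MonoidAlgebra.of K G g
        = MonoidAlgebra.single (h * g) 1 - MonoidAlgebra.single g 1 := by
      rw [sub_mul, one_mul, ← map_mul]
      simp [MonoidAlgebra.of_apply]
    have hmkeq : mk (h * g) = mk g := by
      refine Quotient.sound (QuotientGroup.rightRel_apply.mpr ?_)
      simpa using H.inv_mem hh
    show _ ∈ LinearMap.ker π
    rw [LinearMap.mem_ker, heq, map_sub, hπs, hπs, hmkeq, sub_self]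
  have h_sub_rep : ∀ (rep : G → G), (∀ g, mk (rep g) = mk g) →
      ∀ f : MonoidAlgebra K G, f - MonoidAlgebra.mapDomain rep f ∈ I := by
    intro rep hrep f
    induction f using MonoidAlgebra.induction_linear with
    | zero => simpa using I.zero_mem
    | add f g hf hg =>
      rw [MonoidAlgebra.mapDomain_add, add_sub_add_comm]
      exact I.add_mem hf hg
    | single g a =>
      rw [MonoidAlgebra.mapDomain_single]
      exact h_single_mem g (rep g) a (hrep g).symm
  have h_ker_le_I : LinearMap.ker π ≤ I := by
    intro f hf
    have hrepP : ∀ g : G, mk ((mk g).out) = mk g := fun g => Quotient.out_eq (mk g)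
    have h1 := h_sub_rep _ hrepP f
    have h2 : MonoidAlgebra.mapDomain (fun g => (mk g).out) f = 0 := by
      have hc : (fun g => (mk g).out) = Quotient.out ∘ mk := rfl
      have hf0 : Finsupp.mapDomain mk f.coeff = 0 := hf
      rw [← MonoidAlgebra.coeff_eq_zero]
      show Finsupp.mapDomain (fun g => (mk g).out) f.coeff = 0
      rw [hc, Finsupp.mapDomain_comp, hf0, Finsupp.mapDomain_zero]
    rw [h2, sub_zero] at h1
    exact h1
  have hker : LinearMap.ker π = I := le_antisymm h_ker_le_I h_I_le_ker
  have himg : ∀ s : Set G, (⇑(MonoidAlgebra.of K G) '' s)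
      = ((fun i => MonoidAlgebra.single i (1:K)) '' s : Set (MonoidAlgebra K G)) := by
    intro s
    ext x
    simp [MonoidAlgebra.of_apply]
  have hspan : ∀ s : Set G, Submodule.span K (⇑(MonoidAlgebra.of K G) '' s)
      = MonoidAlgebra.supported K K s := by
    intro s
    rw [himg s, ← MonoidAlgebra.supported_eq_span_single]
  have part1 : (∀ g : G, ∃! t, t ∈ T ∧ mk t = mk g) ↔
      IsCompl I (Submodule.span K (⇑(MonoidAlgebra.of K G) '' T)) := by
    constructor
    · intro hT
      choose rep hrepT hrepmk using fun g => (hT g).exists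
      constructor
      · rw [Submodule.disjoint_def]
        intro x hxI hxT
        have hx0 : Finsupp.mapDomain mk x.coeff = 0 := by
          rw [← hker] at hxI
          exact hxI
        have hsupp : ↑x.coeff.support ⊆ T := by
          rw [hspan] at hxT
          exact MonoidAlgebra.mem_supported.mp hxT
        have hinj : Set.InjOn mk T := by
          intro t₁ ht₁ t₂ ht₂ h12
          exact (hT t₂).unique ⟨ht₁, h12⟩ ⟨ht₂, rfl⟩
        have := Finsupp.mapDomain_injOn T hinj (Set.mem_setOf.mpr hsupp)
          (Set.mem_setOf.mpr (by simp : ↑(0 : G →₀ K).support ⊆ T))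
          (by rw [hx0, Finsupp.mapDomain_zero])
        exact MonoidAlgebra.coeff_eq_zero.mp this
      · rw [codisjoint_iff_le_sup]
        intro f _
        have h1 := h_sub_rep rep hrepmk f
        have h2 : MonoidAlgebra.mapDomain rep f ∈ Submodule.span K (⇑(MonoidAlgebra.of K G) '' T) := by
          rw [hspan]
          refine MonoidAlgebra.mem_supported.mpr ?_
          intro a ha
          rcases Finset.mem_image.mp (Finsupp.mapDomain_support (Finset.mem_coe.mp ha))
            with ⟨b, -, rfl⟩
          exact hrepT b
        have h3 := Submodule.add_mem _ (Submodule.mem_sup_left h1) (Submodule.mem_sup_right h2)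
        rwa [sub_add_cancel] at h3
    · intro hC g
      have hg1 : (MonoidAlgebra.single g 1 : MonoidAlgebra K G) ∈
          I ⊔ Submodule.span K (⇑(MonoidAlgebra.of K G) '' T) := by
        rw [codisjoint_iff.mp hC.codisjoint]
        trivial
      obtain ⟨x, hxI, y, hyT, hxy⟩ := Submodule.mem_sup.mp hg1
      have hπx : Finsupp.mapDomain mk x.coeff = 0 := by
        rw [← hker] at hxI
        exact hxI
      have hy : Finsupp.mapDomain mk y.coeff = Finsupp.single (mk g) 1 := by
        have hc := congrArg π hxy
        rw [map_add] at hc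
        have hπx' : π x = 0 := by rw [← hker] at hxI; exact hxI
        rw [hπx', zero_add, hπs] at hc
        exact hc
      have hsupp : ↑y.coeff.support ⊆ T := by
        rw [hspan] at hyT
        exact MonoidAlgebra.mem_supported.mp hyT
      have hmem : mk g ∈ (Finsupp.mapDomain mk y.coeff).support := by
        rw [hy]
        simp
      obtain ⟨t, htsupp, htg⟩ := Finset.mem_image.mp (Finsupp.mapDomain_support hmem)
      refine ⟨t, ⟨hsupp htsupp, htg⟩, ?_⟩
      rintro t' ⟨ht'T, ht'g⟩
      by_contra hne
      have hzI : (MonoidAlgebra.single t' 1 - MonoidAlgebra.single t 1 : MonoidAlgebra K G) ∈ I :=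
        h_single_mem t' t 1 (ht'g.trans htg.symm)
      have hzT : (MonoidAlgebra.single t' 1 - MonoidAlgebra.single t 1 : MonoidAlgebra K G) ∈
          Submodule.span K (⇑(MonoidAlgebra.of K G) '' T) := by
        rw [hspan]
        refine MonoidAlgebra.mem_supported.mpr ?_
        intro a ha
        rw [MonoidAlgebra.coeff_sub, MonoidAlgebra.coeff_single, MonoidAlgebra.coeff_single] at ha
        rcases Finset.mem_union.mp (Finsupp.support_sub (Finset.mem_coe.mp ha)) with h | h
        · rw [Finset.mem_singleton.mp (Finsupp.support_single_subset h)]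
          exact ht'T
        · rw [Finset.mem_singleton.mp (Finsupp.support_single_subset h)]
          exact hsupp htsupp
      have hz0 := Submodule.disjoint_def.mp hC.disjoint _ hzI hzT
      rw [sub_eq_zero] at hz0
      exact hne (MonoidAlgebra.single_left_injective one_ne_zero hz0)
  have part2 : ∀ n : ℕ, ((fun g => mk g) '' wordBall S n).ncard =
      Module.finrank K ↥(Submodule.span K (⇑(MonoidAlgebra.of K G) '' wordBall S n)) -
      Module.finrank K ↥(I ⊓ Submodule.span K (⇑(MonoidAlgebra.of K G) '' wordBall S n)) := by
    intro n
    have hB : (wordBall S n).Finite := wordBall_finite hS n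
    set B := wordBall S n with hBdef
    set V : Submodule K (MonoidAlgebra K G) :=
      Submodule.span K (⇑(MonoidAlgebra.of K G) '' B) with hV
    haveI : FiniteDimensional K V := FiniteDimensional.span_of_finite K (hB.image _)
    set s : Set (Quotient (QuotientGroup.rightRel H)) := mk '' B with hs
    have hsfin : s.Finite := hB.image _
    haveI : Fintype s := hsfin.fintype
    have hli : LinearIndependent K (fun q : s => Finsupp.single (q : Quotient (QuotientGroup.rightRel H)) (1 : K)) := by
      have h2 := (Finsupp.basisSingleOne (R := K)
        (ι := Quotient (QuotientGroup.rightRel H))).linearIndependent.comp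
        ((↑) : s → Quotient (QuotientGroup.rightRel H)) Subtype.val_injective
      simpa [Finsupp.coe_basisSingleOne, Function.comp_def] using h2
    have hrange : Submodule.map π V
        = Submodule.span K ((fun q => Finsupp.single q (1:K)) '' s) := by
      rw [hV, Submodule.map_span]
      congr 1
      rw [hs, Set.image_image, Set.image_image]
      refine Set.image_congr fun g _ => ?_
      rw [MonoidAlgebra.of_apply, hπs]
    have hfr_range : Module.finrank K ↥(Submodule.map π V) = s.ncard := by
      rw [hrange, Set.image_eq_range]
      have hcard : Fintype.card s = s.ncard := by
        rw [Set.ncard_eq_toFinset_card' s, Set.toFinset_card]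
      exact (finrank_span_eq_card hli).trans hcard
    have hker' : LinearMap.ker (π.domRestrict V) = Submodule.comap V.subtype (I ⊓ V) := by
      ext x
      simp only [LinearMap.mem_ker, LinearMap.domRestrict_apply, Submodule.mem_comap,
        Submodule.mem_inf]
      constructor
      · intro h
        refine ⟨?_, x.2⟩
        rw [← hker]
        exact h
      · intro h
        have := h.1
        rw [← hker] at this
        exact this
    have hfr_ker : Module.finrank K ↥(LinearMap.ker (π.domRestrict V))
        = Module.finrank K ↥(I ⊓ V) := by
      rw [hker']
      exact (Submodule.comapSubtypeEquivOfLe inf_le_right).finrank_eq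
    have hrn := LinearMap.finrank_range_add_finrank_ker (π.domRestrict V)
    rw [LinearMap.range_domRestrict, hfr_ker, hfr_range] at hrn
    show s.ncard = Module.finrank K ↥V - Module.finrank K ↥(I ⊓ V)
    omega
  refine ⟨part1, ?_⟩
  intro n
  have := part2 n
  unfold cogrowth
  exact this
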